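/- arXiv:1712.10275 — 2 statements merged into one kernel-verified Lean document; each statement's English description precedes it below -/
import Mathlib

section
/- If the Hamiltonian H(x,p) is convex in p and independent of t, then for any C^1 function u : 𝕋^{d+1} → ℝ, letting ū(x) = ∫_0^1 u(x,t) dt, one has ∫_{𝕋^{d+1}} e^{k(u_t + H(x,∇u))} ≥ ∫_{𝕋^d} e^{k H(x, ∇ū(x))}. Consequently the infimum of I_k over time-periodic functions equals the infimum over time-independent functions, i.e. H̄_k = H̄_{k,a}. -/
open MeasureTheory

noncomputable section

def gradx {d : ℕ} (u : (Fin d → ℝ) → ℝ → ℝ) (x : Fin d → ℝ) (t : ℝ) : Fin d → ℝ :=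
  fun i => fderiv ℝ (fun y => u y t) x (Pi.single i 1)

def ut {d : ℕ} (u : (Fin d → ℝ) → ℝ → ℝ) (x : Fin d → ℝ) (t : ℝ) : ℝ :=
  deriv (u x) t

def cube (d : ℕ) : Set (Fin d → ℝ) := Set.Icc 0 1

/-- admissible time-periodic competitors -/
def Adm {d : ℕ} (u : (Fin d → ℝ) → ℝ → ℝ) : Prop :=
  ContDiff ℝ 1 (fun p : (Fin d → ℝ) × ℝ => u p.1 p.2) ∧
  (∀ (x : Fin d → ℝ) (t : ℝ) (m : Fin d → ℤ) (j : ℤ),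
    u (x + fun i => (m i : ℝ)) (t + (j : ℝ)) = u x t)

/-- admissible time-independent competitors -/
def AdmA {d : ℕ} (v : (Fin d → ℝ) → ℝ) : Prop :=
  ContDiff ℝ 1 v ∧
  (∀ (x : Fin d → ℝ) (m : Fin d → ℤ), v (x + fun i => (m i : ℝ)) = v x)

/-- the time average `ū(x) = ∫_0^1 u(x,t) dt` -/
def ubar {d : ℕ} (u : (Fin d → ℝ) → ℝ → ℝ) (x : Fin d → ℝ) : ℝ :=
  ∫ t in Set.Icc (0:ℝ) 1, u x t

/-!
For fixed `x`, differentiating under the integral sign gives `∇ū(x) = ∫₀¹ ∇ₓu(x,t) dt`, and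
periodicity in `t` gives `∫₀¹ u_t(x,t) dt = 0`. Jensen's inequality for the convex function
`H x` and then for `exp` yields
`e^{k H(x,∇ū)} ≤ e^{k ∫₀¹ H(x,∇ₓu) dt} = e^{k ∫₀¹ (u_t + H(x,∇ₓu)) dt}
  ≤ ∫₀¹ e^{k (u_t + H(x,∇ₓu))} dt`,
which integrates over `x` to the inequality. Since `ū` is an admissible time-independent
competitor and every time-independent competitor is a time-periodic one with the same action,
the two infima agree.
-/

open Set Function Real

section ParametricIntegral

variable {E F : Type*} [NormedAddCommGroup E] [NormedSpace ℝ E]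
  [NormedAddCommGroup F] [NormedSpace ℝ F] {f : E → ℝ → F}

theorem continuous_fderiv_partial (hf : ContDiff ℝ 1 (uncurry f)) :
    Continuous fun p : E × ℝ => fderiv ℝ (fun y => f y p.2) p.1 := by
  have hswap : ContDiff ℝ 1 (uncurry fun (p : E × ℝ) (y : E) => f y p.2) :=
    hf.comp (contDiff_snd.prodMk (contDiff_snd.comp contDiff_fst))
  exact (hswap.fderiv (n := 0) contDiff_fst (by norm_num)).continuous

theorem continuous_deriv_partial (hf : ContDiff ℝ 1 (uncurry f)) :
    Continuous fun p : E × ℝ => deriv (f p.1) p.2 := by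
  have hf' : ContDiff ℝ 1 (uncurry fun (p : E × ℝ) (s : ℝ) => f p.1 s) :=
    hf.comp ((contDiff_fst.comp contDiff_fst).prodMk contDiff_snd)
  exact (hf'.fderiv_apply (n := 0) contDiff_snd contDiff_const (by norm_num)).continuous

variable [ProperSpace E] {s : Set ℝ}

theorem hasFDerivAt_setIntegral_of_contDiff (hf : ContDiff ℝ 1 (uncurry f))
    (hs : IsCompact s) (x₀ : E) :
    HasFDerivAt (fun x => ∫ t in s, f x t) (∫ t in s, fderiv ℝ (fun y => f y t) x₀) x₀ := by
  have hD := continuous_fderiv_partial hf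
  obtain ⟨C, hC⟩ := ((ProperSpace.isCompact_closedBall x₀ 1).prod hs).exists_bound_of_continuousOn
    hD.continuousOn
  have hslice : ∀ x, Continuous (f x) := fun x => hf.continuous.comp (Continuous.prodMk_right x)
  refine hasFDerivAt_integral_of_dominated_of_fderiv_le
    (F' := fun x t => fderiv ℝ (fun y => f y t) x) (Metric.ball_mem_nhds x₀ one_pos)
    (.of_forall fun x => (hslice x).aestronglyMeasurable)
    ((hslice x₀).continuousOn.integrableOn_compact hs)
    (hD.comp (Continuous.prodMk_right x₀)).aestronglyMeasurable ?_
    (integrableOn_const hs.measure_lt_top.ne) (.of_forall fun t x _ => ?_)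
  · filter_upwards [ae_restrict_mem hs.isClosed.measurableSet] with t ht x hx
    exact hC (x, t) ⟨Metric.ball_subset_closedBall hx, ht⟩
  · exact ((hf.differentiable one_ne_zero).comp (differentiable_id.prodMk
      (differentiable_const t)) x).hasFDerivAt

theorem contDiff_setIntegral_of_contDiff [CompleteSpace F] (hf : ContDiff ℝ 1 (uncurry f))
    (hs : IsCompact s) :
    ContDiff ℝ 1 fun x => ∫ t in s, f x t := by
  rw [contDiff_one_iff_fderiv]
  refine ⟨fun x => (hasFDerivAt_setIntegral_of_contDiff hf hs x).differentiableAt, ?_⟩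
  have hfderiv : fderiv ℝ (fun x => ∫ t in s, f x t) = fun x => ∫ t in s, fderiv ℝ (f · t) x :=
    funext fun x => (hasFDerivAt_setIntegral_of_contDiff hf hs x).fderiv
  rw [hfderiv]
  exact continuous_parametric_integral_of_continuous (continuous_fderiv_partial hf) hs

end ParametricIntegral

theorem integral_Icc_deriv_eq_zero_of_periodic {F : Type*} [NormedAddCommGroup F]
    [NormedSpace ℝ F] [CompleteSpace F] {g : ℝ → F} {T : ℝ} (hg : ContDiff ℝ 1 g) (hper : Periodic g T) (hT : 0 ≤ T) :
    ∫ t in Icc 0 T, deriv g t = 0 := by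
  rw [integral_Icc_eq_integral_Ioc, ← intervalIntegral.integral_of_le hT,
    intervalIntegral.integral_deriv_eq_sub (fun t _ => hg.differentiable one_ne_zero t)
      ((hg.continuous_deriv le_rfl).intervalIntegrable 0 T)]
  simpa using congrArg (· - g 0) (hper 0)

theorem exp_mul_map_integral_le_integral_exp {α E : Type*} [MeasurableSpace α] {μ : Measure α}
    [IsProbabilityMeasure μ] [NormedAddCommGroup E] [NormedSpace ℝ E] [CompleteSpace E]
    {G : E → ℝ} (hG : ConvexOn ℝ univ G) (hGc : Continuous G) {w : α → E} {q : α → ℝ} {c : ℝ}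
    (hc : 0 ≤ c) (hw : Integrable w μ) (hGw : Integrable (fun a => G (w a)) μ) (hq : Integrable q μ)
    (hq0 : ∫ a, q a ∂μ = 0) (hexp : Integrable (fun a => exp (c * (q a + G (w a)))) μ) :
    exp (c * G (∫ a, w a ∂μ)) ≤ ∫ a, exp (c * (q a + G (w a))) ∂μ := by
  have hJensen := hG.map_integral_le hGc.continuousOn isClosed_univ (.of_forall fun _ => trivial)
    hw hGw
  have hshift : ∫ a, c * (q a + G (w a)) ∂μ = c * ∫ a, G (w a) ∂μ := by
    rw [integral_const_mul, integral_add hq hGw, hq0, zero_add]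
  calc exp (c * G (∫ a, w a ∂μ))
      ≤ exp (c * ∫ a, G (w a) ∂μ) := exp_le_exp.2 (mul_le_mul_of_nonneg_left hJensen hc)
    _ = exp (∫ a, c * (q a + G (w a)) ∂μ) := by rw [hshift]
    _ ≤ ∫ a, exp (c * (q a + G (w a))) ∂μ :=
        convexOn_exp.map_integral_le continuous_exp.continuousOn isClosed_univ
          (.of_forall fun _ => trivial) ((hq.add hGw).const_mul c) hexp

instance isProbabilityMeasure_restrict_Icc_zero_one :
    IsProbabilityMeasure (volume.restrict (Icc (0 : ℝ) 1)) :=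
  ⟨by simp [Real.volume_Icc]⟩

variable {d : ℕ}

def grad (v : (Fin d → ℝ) → ℝ) (x : Fin d → ℝ) : Fin d → ℝ :=
  fun i => fderiv ℝ v x (Pi.single i 1)

/-- The functional `I_k[u]` on time-periodic competitors. -/
def action (k : ℝ) (H : (Fin d → ℝ) → (Fin d → ℝ) → ℝ) (u : (Fin d → ℝ) → ℝ → ℝ) : ℝ :=
  ∫ x in cube d, ∫ t in Icc (0 : ℝ) 1, exp (k * (ut u x t + H x (gradx u x t)))

def autonomousAction (k : ℝ) (H : (Fin d → ℝ) → (Fin d → ℝ) → ℝ) (v : (Fin d → ℝ) → ℝ) : ℝ :=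
  ∫ x in cube d, exp (k * H x (grad v x))

theorem continuous_grad {v : (Fin d → ℝ) → ℝ} (hv : ContDiff ℝ 1 v) : Continuous (grad v) :=
  continuous_pi fun _ => (hv.continuous_fderiv one_ne_zero).clm_apply continuous_const

section Competitor

variable {u : (Fin d → ℝ) → ℝ → ℝ}

theorem continuous_gradx (hu : ContDiff ℝ 1 (uncurry u)) : Continuous (uncurry (gradx u)) :=
  continuous_pi fun _ => (continuous_fderiv_partial hu).clm_apply continuous_const

theorem grad_ubar (hu : ContDiff ℝ 1 (uncurry u)) (x : Fin d → ℝ) :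
    grad (ubar u) x = ∫ t in Icc (0 : ℝ) 1, gradx u x t := by
  have hD : Continuous fun t => fderiv ℝ (fun y => u y t) x :=
    (continuous_fderiv_partial hu).comp (Continuous.prodMk_right x)
  have hgradx : Continuous (gradx u x) := (continuous_gradx hu).comp (Continuous.prodMk_right x)
  have hderiv : HasFDerivAt (ubar u) _ x := hasFDerivAt_setIntegral_of_contDiff hu isCompact_Icc x
  funext i
  rw [grad, hderiv.fderiv,
    ContinuousLinearMap.integral_apply (hD.continuousOn.integrableOn_compact isCompact_Icc),
    eval_integral (f := gradx u x) (fun j => ((continuous_apply j).comp hgradx).continuousOn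
      |>.integrableOn_compact isCompact_Icc)]
  rfl

theorem Adm.integral_ut_eq_zero (hu : Adm u) (x : Fin d → ℝ) :
    ∫ t in Icc (0 : ℝ) 1, ut u x t = 0 :=
  integral_Icc_deriv_eq_zero_of_periodic (hu.1.comp (contDiff_const.prodMk contDiff_id))
    (fun t => by simpa [← Pi.zero_def] using hu.2 x t 0 1) zero_le_one

theorem Adm.admA_ubar (hu : Adm u) : AdmA (ubar u) := by
  refine ⟨contDiff_setIntegral_of_contDiff hu.1 isCompact_Icc, fun x m => ?_⟩
  unfold ubar
  congr 1 with t
  simpa using hu.2 x t m 0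

theorem AdmA.const_time {v : (Fin d → ℝ) → ℝ} (hv : AdmA v) : Adm fun x (_ : ℝ) => v x :=
  ⟨hv.1.comp contDiff_fst, fun x _ m _ => hv.2 x m⟩

theorem action_const_time (k : ℝ) (H : (Fin d → ℝ) → (Fin d → ℝ) → ℝ) (v : (Fin d → ℝ) → ℝ) :
    action k H (fun x _ => v x) = autonomousAction k H v := by
  unfold action autonomousAction
  congr 1 with x
  have hgradx : ∀ t, gradx (fun x (_ : ℝ) => v x) x t = grad v x := fun _ => rfl
  simp [ut, hgradx]

variable {k : ℝ} {H : (Fin d → ℝ) → (Fin d → ℝ) → ℝ}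

theorem Adm.exp_mul_H_grad_ubar_le (hu : Adm u) (hHc : Continuous (uncurry H))
    (hconv : ∀ x, ConvexOn ℝ univ (H x)) (hk : 0 ≤ k) (x : Fin d → ℝ) :
    exp (k * H x (grad (ubar u) x))
      ≤ ∫ t in Icc (0 : ℝ) 1, exp (k * (ut u x t + H x (gradx u x t))) := by
  have hHx : Continuous (H x) := hHc.comp (Continuous.prodMk_right x)
  have hw : Continuous (gradx u x) := (continuous_gradx hu.1).comp (Continuous.prodMk_right x)
  have hq : Continuous (ut u x) := (continuous_deriv_partial hu.1).comp (Continuous.prodMk_right x)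
  have hintegrable {g : ℝ → ℝ} (hg : Continuous g) : IntegrableOn g (Icc 0 1) :=
    hg.continuousOn.integrableOn_compact isCompact_Icc
  rw [grad_ubar hu.1]
  exact exp_mul_map_integral_le_integral_exp (hconv x) hHx hk
    (hw.continuousOn.integrableOn_compact isCompact_Icc) (hintegrable (hHx.comp hw))
    (hintegrable hq) (hu.integral_ut_eq_zero x)
    (hintegrable (continuous_exp.comp (continuous_const.mul (hq.add (hHx.comp hw)))))

theorem Adm.autonomousAction_ubar_le (hu : Adm u) (hHc : Continuous (uncurry H))
    (hconv : ∀ x, ConvexOn ℝ univ (H x)) (hk : 0 ≤ k) :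
    autonomousAction k H (ubar u) ≤ action k H u := by
  have hlhs : Continuous fun x => exp (k * H x (grad (ubar u) x)) :=
    continuous_exp.comp (continuous_const.mul
      (hHc.comp (continuous_id.prodMk (continuous_grad hu.admA_ubar.1))))
  have hintegrand : Continuous (uncurry fun x t => exp (k * (ut u x t + H x (gradx u x t)))) :=
    continuous_exp.comp (continuous_const.mul ((continuous_deriv_partial hu.1).add
      (hHc.comp (continuous_fst.prodMk (continuous_gradx hu.1)))))
  exact setIntegral_mono_on (hlhs.continuousOn.integrableOn_compact isCompact_Icc)
    ((continuous_parametric_integral_of_continuous hintegrand isCompact_Icc).continuousOn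
      |>.integrableOn_compact isCompact_Icc)
    measurableSet_Icc fun x _ => hu.exp_mul_H_grad_ubar_le hHc hconv hk x

end Competitor

theorem stmt_3_general (d k : ℕ)
    (H : (Fin d → ℝ) → (Fin d → ℝ) → ℝ)
    (hHc : Continuous (fun p : (Fin d → ℝ) × (Fin d → ℝ) => H p.1 p.2))
    (hconv : ∀ x, ConvexOn ℝ Set.univ (H x)) :
    (∀ u, Adm u →
      (∫ x in cube d, Real.exp ((k : ℝ) * H x (fun i =>
          fderiv ℝ (ubar u) x (Pi.single i 1)))) ≤
      ∫ x in cube d, ∫ t in Set.Icc (0:ℝ) 1,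
        Real.exp ((k : ℝ) * (ut u x t + H x (gradx u x t)))) ∧
    sInf {I : ℝ | ∃ u, Adm u ∧ I = ∫ x in cube d, ∫ t in Set.Icc (0:ℝ) 1,
        Real.exp ((k : ℝ) * (ut u x t + H x (gradx u x t)))} =
    sInf {I : ℝ | ∃ v, AdmA v ∧ I = ∫ x in cube d,
        Real.exp ((k : ℝ) * H x (fun i => fderiv ℝ v x (Pi.single i 1)))} := by
  have hk : (0 : ℝ) ≤ k := k.cast_nonneg
  refine ⟨fun u hu => hu.autonomousAction_ubar_le hHc hconv hk, ?_⟩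
  apply csInf_eq_csInf_of_forall_exists_le
  · rintro _ ⟨u, hu, rfl⟩
    exact ⟨_, ⟨ubar u, hu.admA_ubar, rfl⟩, hu.autonomousAction_ubar_le hHc hconv hk⟩
  · rintro _ ⟨v, hv, rfl⟩
    exact ⟨_, ⟨_, hv.const_time, rfl⟩, (action_const_time _ H v).le⟩

/-- If `H = H(x,p)` is convex in `p` and independent of `t`, then for any
admissible `u`, `I_k[u] ≥ ∫_{𝕋^d} e^{k H(x,∇ū)}`, and consequently the infimum
of `I_k` over time-periodic functions equals the infimum over time-independent
ones, i.e. `H̄_k = H̄_{k,a}`. -/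
theorem stmt_3 (d k : ℕ) (hk : 0 < k)
    (H : (Fin d → ℝ) → (Fin d → ℝ) → ℝ)
    (hHc : Continuous (fun p : (Fin d → ℝ) × (Fin d → ℝ) => H p.1 p.2))
    (hHper : ∀ (x : Fin d → ℝ) (p : Fin d → ℝ) (m : Fin d → ℤ),
      H (x + fun i => (m i : ℝ)) p = H x p)
    (hconv : ∀ x, ConvexOn ℝ Set.univ (H x)) :
    (∀ u, Adm u →
      (∫ x in cube d, Real.exp ((k : ℝ) * H x (fun i =>
          fderiv ℝ (ubar u) x (Pi.single i 1)))) ≤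
      ∫ x in cube d, ∫ t in Set.Icc (0:ℝ) 1,
        Real.exp ((k : ℝ) * (ut u x t + H x (gradx u x t)))) ∧
    sInf {I : ℝ | ∃ u, Adm u ∧ I = ∫ x in cube d, ∫ t in Set.Icc (0:ℝ) 1,
        Real.exp ((k : ℝ) * (ut u x t + H x (gradx u x t)))} =
    sInf {I : ℝ | ∃ v, AdmA v ∧ I = ∫ x in cube d,
        Real.exp ((k : ℝ) * H x (fun i => fderiv ℝ v x (Pi.single i 1)))} :=
  stmt_3_general d k H hHc hconv
end
end

section
/- Let χ : [0,∞) → [0,∞) be continuous with ∫^∞ ds/(χ(s)+1) = ∞. Then for K sufficiently large, there is a C² increasing concave function ψ : [0,2] → ℝ with ψ(0)=0, ψ' > 0 on [0,2], solving 2ψ'' = −χ(ψ') − 1 on (0,2). -/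
/-!
Writing `φ = ψ'`, the equation becomes the autonomous first-order equation
`φ' = -(χ(φ) + 1) / 2`, whose solutions are inverse to primitives of `-2 / (χ + 1)`.
So take `φ` to be the inverse of `g(t) = ∫_t^K 2 du / (χ(u) + 1)`: then `φ(0) = K`, `φ` is
decreasing, and since `∫^∞ ds / (χ(s) + 1) = ∞` we have `g(1) ≥ 2` once `K` is large, which keeps
`φ ≥ 1` on `[0, 2]`. The function `ψ = ∫_0 φ` is then increasing and concave.
-/

open Set MeasureTheory Filter intervalIntegral

section Primitive

variable {f : ℝ → ℝ}

theorem tendsto_primitive_atTop_of_not_integrableOn_Ioi (hf : Continuous f)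
    (hf0 : ∀ u, 0 ≤ f u) {a : ℝ} (hdiv : ¬IntegrableOn f (Ioi a)) :
    Tendsto (fun t => ∫ u in a..t, f u) atTop atTop := by
  have hmono : Monotone fun t => ∫ u in a..t, f u := fun s t hst => by
    simp only [← integral_add_adjacent_intervals (hf.intervalIntegrable a s)
      (hf.intervalIntegrable s t)]
    exact le_add_of_nonneg_right (integral_nonneg hst fun u _ => hf0 u)
  refine tendsto_atTop_atTop_of_monotone' hmono fun ⟨M, hM⟩ => hdiv ?_
  refine integrableOn_Ioi_of_intervalIntegral_norm_bounded M a (fun _ => hf.integrableOn_Ioc)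
    tendsto_id (Eventually.of_forall fun t => ?_)
  simpa only [id, Real.norm_of_nonneg (hf0 _)] using hM (mem_range_self t)

theorem tendsto_primitive_atBot_of_le (hf : Continuous f) {a c : ℝ} (hc : 0 < c)
    (hle : ∀ u ≤ a, c ≤ f u) : Tendsto (fun t => ∫ u in a..t, f u) atBot atBot := by
  refine tendsto_atBot_mono' _ ?_
    (tendsto_atBot_add_const_right _ (-(a * c)) (tendsto_id.atBot_mul_const hc))
  filter_upwards [eventually_le_atBot a] with t ht
  have : c * (a - t) ≤ ∫ u in t..a, f u := by
    simpa [mul_comm] using integral_mono_on ht (intervalIntegrable_const (μ := volume))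
      (hf.intervalIntegrable t a) fun u hu => hle u hu.2
  rw [integral_symm]
  simp only [id]
  linarith

theorem strictMono_primitive_of_pos (hf : Continuous f) (hpos : ∀ u, 0 < f u) (a : ℝ) :
    StrictMono fun t => ∫ u in a..t, f u :=
  strictMono_of_deriv_pos fun t => (hf.deriv_integral _ a t).symm ▸ hpos t

variable (hf : Continuous f) (hpos : ∀ u, 0 < f u)
  (htop : Tendsto (fun t => ∫ u in (0 : ℝ)..t, f u) atTop atTop)
  (hbot : Tendsto (fun t => ∫ u in (0 : ℝ)..t, f u) atBot atBot)

noncomputable def primitiveOrderIso : ℝ ≃o ℝ :=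
  StrictMono.orderIsoOfSurjective _ (strictMono_primitive_of_pos hf hpos 0)
    ((continuous_primitive (fun _ _ => hf.intervalIntegrable _ _) 0).surjective htop hbot)

theorem hasDerivAt_primitiveOrderIso_symm (y : ℝ) :
    HasDerivAt (primitiveOrderIso hf hpos htop hbot).symm
      (f ((primitiveOrderIso hf hpos htop hbot).symm y))⁻¹ y :=
  .of_local_left_inverse (primitiveOrderIso hf hpos htop hbot).symm.continuous.continuousAt
    (hf.integral_hasStrictDerivAt 0 _).hasDerivAt (hpos _).ne'
    (Eventually.of_forall (primitiveOrderIso hf hpos htop hbot).apply_symm_apply)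

theorem contDiff_primitiveOrderIso_symm :
    ContDiff ℝ 1 (primitiveOrderIso hf hpos htop hbot).symm := by
  refine contDiff_one_iff_deriv.2
    ⟨fun y => (hasDerivAt_primitiveOrderIso_symm hf hpos htop hbot y).differentiableAt, ?_⟩
  rw [funext fun y => (hasDerivAt_primitiveOrderIso_symm hf hpos htop hbot y).deriv]
  exact (hf.comp (primitiveOrderIso hf hpos htop hbot).symm.continuous).inv₀
    fun y => (hpos _).ne'

end Primitive

section PrimitiveOn

variable {φ : ℝ → ℝ} {s : Set ℝ}

theorem contDiff_primitive {n : ℕ} (hφ : ContDiff ℝ n φ) (a : ℝ) :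
    ContDiff ℝ (n + 1) fun r => ∫ u in a..r, φ u := by
  have hc : Continuous φ := hφ.continuous
  refine contDiff_succ_iff_deriv.2
    ⟨fun r => (hc.integral_hasStrictDerivAt a r).hasDerivAt.differentiableAt, by simp, ?_⟩
  rwa [funext (hc.deriv_integral _ a)]

theorem strictMonoOn_primitive_of_pos (hφ : Continuous φ) (hs : Convex ℝ s)
    (hpos : ∀ r ∈ s, 0 < φ r) (a : ℝ) : StrictMonoOn (fun r => ∫ u in a..r, φ u) s :=
  strictMonoOn_of_deriv_pos hs
    (continuous_primitive (fun _ _ => hφ.intervalIntegrable _ _) a).continuousOn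
    fun r hr => (hφ.deriv_integral _ a r).symm ▸ hpos r (interior_subset hr)

theorem concaveOn_primitive_of_antitoneOn (hφ : Continuous φ) (hs : Convex ℝ s)
    (hanti : AntitoneOn φ s) (a : ℝ) : ConcaveOn ℝ s fun r => ∫ u in a..r, φ u := by
  have hd : Differentiable ℝ fun r => ∫ u in a..r, φ u := fun r =>
    (hφ.integral_hasStrictDerivAt a r).hasDerivAt.differentiableAt
  refine AntitoneOn.concaveOn_of_deriv hs hd.continuous.continuousOn hd.differentiableOn ?_
  rw [funext (hφ.deriv_integral _ a)]
  exact hanti.mono interior_subset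

end PrimitiveOn

section TimeDensity

variable {χ : ℝ → ℝ}

/-- `2 / (χ(u) + 1)`, frozen at its value at `0` for `u < 0` so that its primitive maps `ℝ`
onto `ℝ`. -/
noncomputable def timeDensity (χ : ℝ → ℝ) (u : ℝ) : ℝ := 2 * (χ (max u 0) + 1)⁻¹

theorem timeDensity_pos (hχnn : ∀ s, 0 ≤ s → 0 ≤ χ s) (u : ℝ) : 0 < timeDensity χ u := by
  have := hχnn _ (le_max_right u 0)
  unfold timeDensity
  positivity

theorem continuous_timeDensity (hχc : ContinuousOn χ (Ici 0)) (hχnn : ∀ s, 0 ≤ s → 0 ≤ χ s) :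
    Continuous (timeDensity χ) :=
  continuous_const.mul <|
    ((hχc.comp_continuous (continuous_id.max continuous_const) fun u => le_max_right u 0).add
      continuous_const).inv₀
      fun u => (add_pos_of_nonneg_of_pos (hχnn _ (le_max_right u 0)) one_pos).ne'

theorem timeDensity_of_nonpos {u : ℝ} (hu : u ≤ 0) : timeDensity χ u = timeDensity χ 0 := by
  simp only [timeDensity, max_eq_right hu, max_self]

theorem two_mul_inv_timeDensity {u : ℝ} (hu : 0 ≤ u) : 2 * (timeDensity χ u)⁻¹ = χ u + 1 := by
  simp only [timeDensity, max_eq_left hu, mul_inv, inv_inv]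
  field_simp

theorem not_integrableOn_timeDensity (hdiv : ¬IntegrableOn (fun s => (χ s + 1)⁻¹) (Ici 0)) :
    ¬IntegrableOn (timeDensity χ) (Ioi 0) := fun h => by
  refine hdiv ((integrableOn_Ici_iff_integrableOn_Ioi).2
    (IntegrableOn.congr_fun (h.const_mul 2⁻¹) (fun u hu => ?_) measurableSet_Ioi))
  rw [timeDensity, max_eq_left (le_of_lt (mem_Ioi.1 hu)), inv_mul_cancel_left₀ two_ne_zero]

theorem exists_firstOrder_solution (hχc : ContinuousOn χ (Ici 0))
    (hχnn : ∀ s, 0 ≤ s → 0 ≤ χ s) (hdiv : ¬IntegrableOn (fun s => (χ s + 1)⁻¹) (Ici 0)) :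
    ∃ K₀ : ℝ, ∀ K ≥ K₀, ∃ φ : ℝ → ℝ, ContDiff ℝ 1 φ ∧ Antitone φ ∧
      (∀ r ∈ Icc (0 : ℝ) 2, 1 ≤ φ r ∧ φ r ≤ K) ∧
      ∀ r ∈ Icc (0 : ℝ) 2, 2 * deriv φ r = -χ (φ r) - 1 := by
  have hFc := continuous_timeDensity hχc hχnn
  have hFpos := timeDensity_pos hχnn
  have htop := tendsto_primitive_atTop_of_not_integrableOn_Ioi hFc (fun u => (hFpos u).le)
    (not_integrableOn_timeDensity hdiv)
  have hbot := tendsto_primitive_atBot_of_le hFc (hFpos 0) fun u hu =>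
    (timeDensity_of_nonpos hu).ge
  set e := primitiveOrderIso hFc hFpos htop hbot
  obtain ⟨K₀, hK₀⟩ := eventually_atTop.1 (htop.eventually_ge_atTop (e 1 + 2))
  refine ⟨K₀, fun K hK => ?_⟩
  have hK : e 1 + 2 ≤ e K := hK₀ K hK
  -- `φ` inverts `t ↦ ∫_t^K timeDensity χ = e K - e t`
  set φ : ℝ → ℝ := fun r => e.symm (e K - r)
  have hφ : ∀ r, HasDerivAt φ (-(timeDensity χ (φ r))⁻¹) r := fun r => by
    have h := (hasDerivAt_primitiveOrderIso_symm hFc hFpos htop hbot (e K - r)).comp r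
      ((hasDerivAt_id r).const_sub (e K))
    rwa [mul_neg_one] at h
  have hφ_mem : ∀ r ∈ Icc (0 : ℝ) 2, 1 ≤ φ r ∧ φ r ≤ K := fun r hr =>
    ⟨e.le_symm_apply.2 (by linarith [hr.2]), e.symm_apply_le.2 (by linarith [hr.1])⟩
  refine ⟨φ, (contDiff_primitiveOrderIso_symm hFc hFpos htop hbot).comp
    (contDiff_const.sub contDiff_id), fun a b hab => e.symm.monotone (by linarith), hφ_mem,
    fun r hr => ?_⟩
  rw [(hφ r).deriv, mul_neg, two_mul_inv_timeDensity (zero_le_one.trans (hφ_mem r hr).1)]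
  ring

end TimeDensity

/-- Let `χ : [0,∞) → [0,∞)` be continuous with `∫^∞ ds/(χ(s)+1) = ∞`.  Then for
all `K` sufficiently large there is a `C²` increasing concave function
`ψ : [0,2] → ℝ` with `ψ(0) = 0`, `0 < ψ' ≤ K` on `[0,2]`, solving
`2ψ'' = -χ(ψ') - 1` on `(0,2)`. -/
theorem stmt_5 (χ : ℝ → ℝ) (hχc : ContinuousOn χ (Ici 0))
    (hχnn : ∀ s, 0 ≤ s → 0 ≤ χ s)
    (hdiv : ¬ IntegrableOn (fun s => (χ s + 1)⁻¹) (Ici 0)) :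
    ∃ K₀ : ℝ, ∀ K ≥ K₀, ∃ ψ : ℝ → ℝ,
      ContDiffOn ℝ 2 ψ (Icc 0 2) ∧
      ψ 0 = 0 ∧
      StrictMonoOn ψ (Icc 0 2) ∧
      ConcaveOn ℝ (Icc 0 2) ψ ∧
      (∀ r ∈ Icc (0:ℝ) 2, 0 < deriv ψ r ∧ deriv ψ r ≤ K) ∧
      (∀ r ∈ Ioo (0:ℝ) 2, 2 * deriv (deriv ψ) r = -(χ (deriv ψ r)) - 1) := by
  obtain ⟨K₀, hK₀⟩ := exists_firstOrder_solution hχc hχnn hdiv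
  refine ⟨K₀, fun K hK => ?_⟩
  obtain ⟨φ, hφ, hanti, hbound, hode⟩ := hK₀ K hK
  have hψ' : deriv (fun r => ∫ u in (0 : ℝ)..r, φ u) = φ :=
    funext (hφ.continuous.deriv_integral _ 0)
  refine ⟨fun r => ∫ u in (0 : ℝ)..r, φ u, (contDiff_primitive hφ 0).contDiffOn, integral_same,
    strictMonoOn_primitive_of_pos hφ.continuous (convex_Icc 0 2)
      (fun r hr => one_pos.trans_le (hbound r hr).1) 0,
    concaveOn_primitive_of_antitoneOn hφ.continuous (convex_Icc 0 2) (hanti.antitoneOn _) 0,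
    fun r hr => ?_, fun r hr => ?_⟩
  · rw [hψ']
    exact ⟨one_pos.trans_le (hbound r hr).1, (hbound r hr).2⟩
  · rw [hψ']
    exact hode r (Ioo_subset_Icc_self hr)
end
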